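/- If Shuffler uses the greedy strategy on a deck with m copies of each of n card types and Guesser uses the strategy of always guessing a most-abundant card type, then the expected number of correct guesses on cards of multiplicity m equals the n-th harmonic number H_n = Σ_{x=1}^n 1/x; in particular E[C_m] = log n + O(1). -/

import Mathlib

/-!
Call a card type full while all `m` of its copies remain. As long as some type is full, a
most-abundant guess names a full type, so with support size `s` and `a` full types the greedy
draw scores (on a multiplicity-`m` card) with probability `1/s`, and every draw of a full type
makes it non-full. Writing `E(a)` for the expected remaining score, this gives
`s E(a) = 1 + a E(a-1) + (s-a) E(a)`, i.e. `a E(a) = 1 + a E(a-1)`, whatever the rest of the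
deck looks like; hence `E(a) = H_a`, and the full deck gives `H_n`. The logarithmic estimate is
`log (n+1) ≤ H_n ≤ 1 + log n`.
-/


open Finset

abbrev Deck (n : ℕ) := Fin n → ℕ
abbrev Strat (n : ℕ) := Deck n → Fin n → ℝ

/-- Remove one copy of card type `j` from the deck. -/
def Deck.sub {n : ℕ} (d : Deck n) (j : Fin n) : Deck n :=
  fun i => if i = j then d i - 1 else d i

/-- `p` is a probability distribution on `Fin n`. -/
def IsDist {n : ℕ} (p : Fin n → ℝ) : Prop :=
  (∀ i, 0 ≤ p i) ∧ ∑ i, p i = 1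

/-- A Guesser strategy outputs a distribution on card types for each nonzero deck. -/
def IsGuesser {n : ℕ} (G : Strat n) : Prop :=
  ∀ d : Deck n, d ≠ 0 → IsDist (G d)

/-- A Shuffler strategy outputs a distribution supported on the support of the deck. -/
def IsShuffler {n : ℕ} (S : Strat n) : Prop :=
  ∀ d : Deck n, d ≠ 0 → IsDist (S d) ∧ ∀ i, S d i ≠ 0 → d i ≠ 0

/-- Expected score of the game, computed with fuel `N` (the number of cards). -/
def scoreAux {n : ℕ} (G S : Strat n) : ℕ → Deck n → ℝ
  | 0, _ => 0
  | N + 1, d => ∑ j ∈ Finset.univ.filter (fun j => d j ≠ 0),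
      S d j * (G d j + scoreAux G S N (d.sub j))

/-- The expected score `E[C(d,G,S)]`. -/
noncomputable def score {n : ℕ} (G S : Strat n) (d : Deck n) : ℝ :=
  scoreAux G S (∑ i, d i) d

/-- `f(d,S)`: maximum expected score over all Guesser strategies. -/
noncomputable def fval {n : ℕ} (S : Strat n) (d : Deck n) : ℝ :=
  sSup {x | ∃ G, IsGuesser G ∧ score G S d = x}

/-- `F(d,S)`: minimum expected score over all Guesser strategies. -/
noncomputable def Fval {n : ℕ} (S : Strat n) (d : Deck n) : ℝ :=
  sInf {x | ∃ G, IsGuesser G ∧ score G S d = x}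

/-- `f(d) = min_S f(d,S)`. -/
noncomputable def fopt {n : ℕ} (d : Deck n) : ℝ :=
  sInf {x | ∃ S, IsShuffler S ∧ fval S d = x}

/-- `F(d) = max_S F(d,S)`. -/
noncomputable def Fopt {n : ℕ} (d : Deck n) : ℝ :=
  sSup {x | ∃ S, IsShuffler S ∧ Fval S d = x}

/-- The greedy Shuffler strategy: uniform on the support of the deck. -/
noncomputable def greedy {n : ℕ} : Strat n :=
  fun d i => if d i ≠ 0 then ((Finset.univ.filter fun j => d j ≠ 0).card : ℝ)⁻¹ else 0
/-- The random deck produced by the greedy Shuffler: with fuel `N`, repeatedly draw a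
uniformly random card type among those remaining, producing the list of drawn types. -/
noncomputable def deckPMF {n : ℕ} : ℕ → Deck n → PMF (List (Fin n))
  | 0, _ => PMF.pure []
  | N + 1, d =>
      if h : (Finset.univ.filter fun j => d j ≠ 0).Nonempty then
        (PMF.uniformOfFinset _ h).bind fun j => (deckPMF N (d.sub j)).map (List.cons j)
      else PMF.pure []

/-- Expectation of `f` with respect to the distribution `P` on decks. -/
noncomputable def pexp {n : ℕ} (P : PMF (List (Fin n))) (f : List (Fin n) → ℝ) : ℝ :=
  ∑' l : List (Fin n), (P l).toReal * f l

/-- `simC g k d l`: the number of correct guesses made on cards whose type had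
multiplicity exactly `k` at the moment of the guess, when the deterministic Guesser `g`
plays against the drawn sequence `l`, starting from deck `d`. -/
def simC {n : ℕ} (g : Deck n → Fin n) (k : ℕ) : Deck n → List (Fin n) → ℕ
  | _, [] => 0
  | d, j :: l => (if g d = j ∧ d j = k then 1 else 0) + simC g k (d.sub j) l

/-- `simV k ℓ d l`: the number of card types with at least `ℓ` copies remaining at the
first moment when every card type has fewer than `k` copies remaining, along the drawn
sequence `l` starting from deck `d`. -/
def simV {n : ℕ} (k ℓ : ℕ) : Deck n → List (Fin n) → ℕ
  | d, [] => (Finset.univ.filter fun i => ℓ ≤ d i).card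
  | d, j :: l =>
      if ∀ i, d i < k then (Finset.univ.filter fun i => ℓ ≤ d i).card
      else simV k ℓ (d.sub j) l

open scoped ENNReal

namespace PMF

variable {α β : Type*}

/-- Expectation in `ℝ≥0∞`, where the series needs no summability side condition. -/
noncomputable def lexpect (p : PMF α) (u : α → ℝ≥0∞) : ℝ≥0∞ := ∑' a, p a * u a

lemma lexpect_pure (x : α) (u : α → ℝ≥0∞) : (PMF.pure x).lexpect u = u x := by
  rw [lexpect, tsum_eq_single x fun b hb => by simp [PMF.pure_apply, hb]]
  simp

lemma lexpect_bind (p : PMF α) (q : α → PMF β) (u : β → ℝ≥0∞) :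
    (p.bind q).lexpect u = ∑' a, p a * (q a).lexpect u := by
  simp_rw [lexpect, PMF.bind_apply, ← ENNReal.tsum_mul_right, mul_assoc, ← ENNReal.tsum_mul_left]
  exact ENNReal.tsum_comm

lemma lexpect_map (p : PMF α) (f : α → β) (u : β → ℝ≥0∞) :
    (p.map f).lexpect u = p.lexpect (u ∘ f) := by
  rw [PMF.map, lexpect_bind]
  exact tsum_congr fun a => by rw [Function.comp_apply, lexpect_pure]; rfl

lemma lexpect_uniformOfFinset_bind (s : Finset α) (hs : s.Nonempty) (q : α → PMF β)
    (u : β → ℝ≥0∞) :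
    ((uniformOfFinset s hs).bind q).lexpect u = ∑ a ∈ s, (#s : ℝ≥0∞)⁻¹ * (q a).lexpect u := by
  rw [lexpect_bind, tsum_eq_sum fun a ha => by rw [uniformOfFinset_apply, if_neg ha, zero_mul]]
  exact sum_congr rfl fun a ha => by rw [uniformOfFinset_apply, if_pos ha]

lemma lexpect_const_add (p : PMF α) (c : ℝ≥0∞) (u : α → ℝ≥0∞) :
    p.lexpect (fun a => c + u a) = c + p.lexpect u := by
  simp_rw [lexpect, mul_add, ENNReal.tsum_add, ENNReal.tsum_mul_right, tsum_coe, one_mul]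

lemma toReal_lexpect_natCast (p : PMF α) (u : α → ℕ) :
    (p.lexpect fun a => (u a : ℝ≥0∞)).toReal = ∑' a, (p a).toReal * u a := by
  rw [lexpect, ENNReal.tsum_toReal_eq fun a => ENNReal.mul_ne_top (p.apply_ne_top a) (by simp)]
  simp_rw [ENNReal.toReal_mul, ENNReal.toReal_natCast]

end PMF

noncomputable def harmonicENNReal (a : ℕ) : ℝ≥0∞ := ∑ x ∈ range a, ((x + 1 : ℕ) : ℝ≥0∞)⁻¹

lemma toReal_harmonicENNReal (a : ℕ) : (harmonicENNReal a).toReal = harmonic a := by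
  rw [harmonicENNReal, ENNReal.toReal_sum fun x _ => by simp, harmonic, Rat.cast_sum]
  exact sum_congr rfl fun x _ => by rw [ENNReal.toReal_inv, ENNReal.toReal_natCast]; push_cast; rfl

lemma succ_mul_harmonicENNReal_succ (b : ℕ) :
    (b + 1 : ℕ) * harmonicENNReal (b + 1) = 1 + (b + 1 : ℕ) * harmonicENNReal b := by
  rw [harmonicENNReal, sum_range_succ, mul_add,
    ENNReal.mul_inv_cancel (by exact_mod_cast b.succ_ne_zero) (ENNReal.natCast_ne_top _),
    add_comm, harmonicENNReal]

lemma sum_ite_add_harmonicENNReal_erase {α : Type*} [DecidableEq α] {A S : Finset α}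
    (hAS : A ⊆ S) {i : α} (hi : i ∈ A) :
    ∑ j ∈ S, ((if j = i then 1 else 0) + harmonicENNReal #(A.erase j))
      = #S * harmonicENNReal #A := by
  obtain ⟨b, hb⟩ : ∃ b, #A = b + 1 := ⟨#A - 1, by have := card_pos.mpr ⟨i, hi⟩; omega⟩
  have hout : ∀ j ∈ S \ A, (if j = i then 1 else 0) + harmonicENNReal #(A.erase j)
      = harmonicENNReal #A := fun j hj => by
    have hjA := (mem_sdiff.mp hj).2
    rw [if_neg (ne_of_mem_of_not_mem hi hjA).symm, erase_eq_of_notMem hjA, zero_add]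
  have hin : ∀ j ∈ A, harmonicENNReal #(A.erase j) = harmonicENNReal b := fun j hj => by
    rw [card_erase_of_mem hj, hb, Nat.add_sub_cancel]
  rw [← sum_sdiff hAS, sum_congr rfl hout, sum_add_distrib, sum_ite_eq' A i, if_pos hi,
    sum_congr rfl hin, sum_const, sum_const, nsmul_eq_mul, nsmul_eq_mul, hb,
    ← succ_mul_harmonicENNReal_succ, ← hb, ← add_mul, ← Nat.cast_add,
    card_sdiff_add_card_eq_card hAS]

namespace Deck

variable {n : ℕ}

lemma sub_le (d : Deck n) (j i : Fin n) : d.sub j i ≤ d i := by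
  unfold Deck.sub; split <;> omega

lemma sum_sub_add_one {d : Deck n} {j : Fin n} (hj : d j ≠ 0) :
    ∑ i, d.sub j i + 1 = ∑ i, d i := by
  have hupd : d.sub j = Function.update d j (d j - 1) := by
    ext i; by_cases h : i = j <;> simp [Deck.sub, h]
  rw [hupd, sum_update_of_mem (mem_univ j), sum_eq_add_sum_sdiff_singleton_of_mem (mem_univ j) d]
  omega

lemma filter_sub_eq_erase {m : ℕ} (hm : 0 < m) {d : Deck n} (hd : ∀ i, d i ≤ m) (j : Fin n) :
    ({i | d.sub j i = m} : Finset (Fin n)) = ({i | d i = m} : Finset (Fin n)).erase j := by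
  ext i
  have := hd i
  simp only [mem_filter, mem_univ, true_and, mem_erase]
  unfold Deck.sub
  split_ifs with hij
  · subst hij; omega
  · simp [hij]

end Deck

section Game

variable {n : ℕ}

lemma lexpect_deckPMF_succ {N : ℕ} {d : Deck n} (h : ({j | d j ≠ 0} : Finset (Fin n)).Nonempty)
    (u : List (Fin n) → ℝ≥0∞) :
    (deckPMF (N + 1) d).lexpect u
      = ∑ j ∈ {j | d j ≠ 0}, (#{j | d j ≠ 0} : ℝ≥0∞)⁻¹ *
          (deckPMF N (d.sub j)).lexpect fun l => u (j :: l) := by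
  rw [deckPMF, dif_pos h, PMF.lexpect_uniformOfFinset_bind]
  exact sum_congr rfl fun j _ => by rw [PMF.lexpect_map]; rfl

lemma lexpect_simC_deckPMF {m : ℕ} (hm : 0 < m) {g : Deck n → Fin n}
    (hg : ∀ (d : Deck n) (j : Fin n), d j ≤ d (g d)) (N : ℕ) {d : Deck n}
    (hd : ∀ i, d i ≤ m) (hN : ∑ i, d i = N) :
    (deckPMF N d).lexpect (fun l => (simC g m d l : ℝ≥0∞))
      = harmonicENNReal #{i | d i = m} := by
  induction N generalizing d with
  | zero =>
    have hA : ({i | d i = m} : Finset (Fin n)) = ∅ := filter_false_of_mem fun i _ => by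
      rw [sum_eq_zero_iff.mp hN i (mem_univ i)]; omega
    rw [deckPMF, PMF.lexpect_pure, hA]
    simp [simC, harmonicENNReal]
  | succ N ih =>
    set S : Finset (Fin n) := {j | d j ≠ 0}
    set A : Finset (Fin n) := {i | d i = m}
    have hAS : A ⊆ S := fun i hi => by
      simp only [S, A, mem_filter, mem_univ, true_and] at hi ⊢; omega
    have hS : S.Nonempty := by
      obtain ⟨i, -, hi⟩ := exists_ne_zero_of_sum_ne_zero (by omega : ∑ i, d i ≠ 0)
      exact ⟨i, by simpa [S] using hi⟩
    have hstep : ∀ j ∈ S, (deckPMF N (d.sub j)).lexpect (fun l => (simC g m d (j :: l) : ℝ≥0∞))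
        = (if g d = j ∧ d j = m then 1 else 0) + harmonicENNReal #(A.erase j) := fun j hj => by
      have hN' := Deck.sum_sub_add_one (mem_filter.mp hj).2
      simp_rw [simC, Nat.cast_add, Nat.cast_ite, Nat.cast_one, Nat.cast_zero]
      rw [PMF.lexpect_const_add, ih (fun i => (d.sub_le j i).trans (hd i)) (by omega),
        Deck.filter_sub_eq_erase hm hd j]
    have hsum : ∑ j ∈ S, ((if g d = j ∧ d j = m then 1 else 0) + harmonicENNReal #(A.erase j))
        = #S * harmonicENNReal #A := by
      rcases A.eq_empty_or_nonempty with hA | ⟨i, hi⟩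
      · have hnot : ∀ j, ¬ (g d = j ∧ d j = m) := fun j hj =>
          (eq_empty_iff_forall_notMem.mp hA) j (by simp [A, hj.2])
        simp [hA, hnot, harmonicENNReal]
      · have hgd : d (g d) = m := le_antisymm (hd _) ((mem_filter.mp hi).2 ▸ hg d i)
        have hbonus : ∀ j, (g d = j ∧ d j = m) ↔ j = g d := fun j =>
          ⟨fun h => h.1.symm, fun h => by subst h; exact ⟨rfl, hgd⟩⟩
        simp_rw [hbonus]
        exact sum_ite_add_harmonicENNReal_erase hAS (by simpa [A] using hgd)
    have hS0 : (#S : ℝ≥0∞) ≠ 0 := by exact_mod_cast (card_pos.mpr hS).ne'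
    rw [lexpect_deckPMF_succ hS, sum_congr rfl fun j hj => by rw [hstep j hj], ← mul_sum, hsum,
      ← mul_assoc, ENNReal.inv_mul_cancel hS0 (ENNReal.natCast_ne_top _), one_mul]

lemma pexp_simC_deckPMF_const_eq_harmonic {m : ℕ} (hm : 0 < m) (g : Deck n → Fin n)
    (hg : ∀ (d : Deck n) (j : Fin n), d j ≤ d (g d)) :
    pexp (deckPMF (m * n) (fun _ => m)) (fun l => (simC g m (fun _ => m) l : ℝ)) = harmonic n := by
  rw [pexp, ← PMF.toReal_lexpect_natCast,
    lexpect_simC_deckPMF hm hg (m * n) (fun _ => le_rfl) (by simp [mul_comm]),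
    filter_true_of_mem fun _ _ => rfl, card_univ, Fintype.card_fin, toReal_harmonicENNReal]

end Game

lemma abs_harmonic_sub_log_le_one (n : ℕ) : |(harmonic n : ℝ) - Real.log n| ≤ 1 := by
  have hlog : Real.log n ≤ Real.log (n + 1) := by
    rcases n.eq_zero_or_pos with rfl | hn
    · simp
    · exact Real.log_le_log (by exact_mod_cast hn) (by linarith)
  have := log_add_one_le_harmonic n
  have := harmonic_le_one_add_log n
  rw [abs_le]; push_cast at *; constructor <;> linarith

/-- against the greedy Shuffler on the deck of `m` copies of `n` types, a
Guesser always guessing a most-abundant type gets expected number of correct guesses on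
multiplicity-`m` cards exactly the harmonic number `H_n`; in particular it is
`log n + O(1)`. -/
theorem stmt14 :
    (∀ (n m : ℕ), 0 < n → 0 < m → ∀ g : Deck n → Fin n, (∀ (d : Deck n) (j : Fin n), d j ≤ d (g d)) →
      pexp (deckPMF (m * n) (fun _ => m)) (fun l => (simC g m (fun _ => m) l : ℝ)) =
        ∑ x ∈ Finset.range n, (1 : ℝ) / (x + 1)) ∧
    ∃ c : ℝ, ∀ (n m : ℕ), 0 < n → 0 < m → ∀ g : Deck n → Fin n, (∀ (d : Deck n) (j : Fin n), d j ≤ d (g d)) →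
      |pexp (deckPMF (m * n) (fun _ => m)) (fun l => (simC g m (fun _ => m) l : ℝ)) -
        Real.log n| ≤ c := by
  refine ⟨fun n m _ hm g hg => ?_, 1, fun n m _ hm g hg => ?_⟩
  · rw [pexp_simC_deckPMF_const_eq_harmonic hm g hg, harmonic]
    push_cast
    simp [one_div]
  · rw [pexp_simC_deckPMF_const_eq_harmonic hm g hg]
    exact abs_harmonic_sub_log_le_one n
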